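/- arXiv:2408.09672 — 5 statements merged into one kernel-verified Lean document; each statement's English description precedes it below -/
import Mathlib

section
/- Let φ: ℝ → ℝ ∪ {∞} be convex, lower semi-continuous with φ(1)=0 and φ(x)=∞ for x<0, and let η>0. For real numbers f₁,…,f_m, the penalized φ-divergence problem max over γ in the probability simplex Δ^m of ∑_i γ_i f_i − (η/m) ∑_i φ(m γ_i) has optimal value equal to min over μ ∈ ℝ of μ + (1/m) ∑_i (ηφ)^*(f_i − μ), where (ηφ)^* denotes the convex conjugate of s ↦ η·φ(s). -/
open Set Finset

lemma exists_affine_minorant (φ : ℝ → ℝ) (hconv : ConvexOn ℝ (Set.Ici 0) φ) :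
    ∃ a b : ℝ, ∀ s : ℝ, 0 ≤ s → a * s + b ≤ φ s := by
  refine ⟨φ 2 - φ 1, min (2 * φ 1 - φ 2) (4 * φ 1 - 2 * φ 2 - φ 0), fun s hs => ?_⟩
  have hb1 : min (2 * φ 1 - φ 2) (4 * φ 1 - 2 * φ 2 - φ 0) ≤ 2 * φ 1 - φ 2 := min_le_left _ _
  have hb2 : min (2 * φ 1 - φ 2) (4 * φ 1 - 2 * φ 2 - φ 0) ≤ 4 * φ 1 - 2 * φ 2 - φ 0 :=
    min_le_right _ _
  have ha0a : φ 1 - φ 0 ≤ φ 2 - φ 1 := by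
    have h := hconv.slope_mono_adjacent (x := 0) (y := 1) (z := 2) (mem_Ici.2 le_rfl)
      (mem_Ici.2 (by norm_num)) one_pos one_lt_two
    norm_num at h; linarith
  rcases lt_trichotomy s 1 with h1 | h1 | h1
  · have h := hconv.slope_mono_adjacent (x := s) (y := 1) (z := 2) (mem_Ici.2 hs)
      (mem_Ici.2 (by norm_num)) h1 one_lt_two
    norm_num at h
    rw [div_le_iff₀ (by linarith)] at h
    nlinarith [h]
  · subst h1; nlinarith [hb1]
  · rcases lt_trichotomy s 2 with h2 | h2 | h2
    · have h := hconv.slope_mono_adjacent (x := 0) (y := 1) (z := s) (mem_Ici.2 le_rfl)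
        (mem_Ici.2 hs) one_pos h1
      norm_num at h
      have h' : (φ 1 - φ 0) * (s - 1) ≤ φ s - φ 1 := by
        rw [← le_div_iff₀ (by linarith : (0:ℝ) < s - 1)]; linarith
      nlinarith [h', ha0a, hb2]
    · subst h2; nlinarith [hb1]
    · have h := hconv.slope_mono_adjacent (x := 1) (y := 2) (z := s) (mem_Ici.2 (by norm_num))
        (mem_Ici.2 hs) one_lt_two h2
      norm_num at h
      have h' : (φ 2 - φ 1) * (s - 2) ≤ φ s - φ 2 := by
        rw [← le_div_iff₀ (by linarith : (0:ℝ) < s - 2)]; linarith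
      nlinarith [h', hb1]

set_option maxHeartbeats 2000000 in
/-- strong duality for the penalized φ-divergence problem on the simplex:
the max over `γ ∈ Δ^m` of `∑ γ_i f_i − (η/m) ∑ φ(m γ_i)` equals the min over `μ` of
`μ + (1/m) ∑ (ηφ)^*(f_i − μ)`, where `(ηφ)^*` is the convex conjugate of `s ↦ η·φ(s)`
(a sup over `s ≥ 0`, valued in `EReal` since it can be `+∞`). -/
theorem stmt0 (φ : ℝ → ℝ) (hconv : ConvexOn ℝ (Set.Ici 0) φ)
    (hlsc : LowerSemicontinuousOn φ (Set.Ici 0)) (hφ1 : φ 1 = 0)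
    (η : ℝ) (hη : 0 < η) (m : ℕ) (hm : 0 < m) (f : Fin m → ℝ)
    (conjE : ℝ → EReal)
    (hconjE : ∀ t : ℝ, conjE t = ⨆ s : {s : ℝ // 0 ≤ s}, ((t * s.1 - η * φ s.1 : ℝ) : EReal)) :
    sSup {v : ℝ | ∃ γ : Fin m → ℝ, (∀ i, 0 ≤ γ i) ∧ ∑ i, γ i = 1 ∧
        v = ∑ i, γ i * f i - (η / m) * ∑ i, φ (m * γ i)}
      = sInf {v : ℝ | ∃ μ : ℝ, (∀ i, conjE (f i - μ) ≠ ⊤) ∧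
        v = μ + (1 / m) * ∑ i, (conjE (f i - μ)).toReal} := by
  have hm' : (0:ℝ) < (m:ℝ) := by exact_mod_cast hm
  have hm1 : (1:ℝ) ≤ (m:ℝ) := by exact_mod_cast hm
  obtain ⟨a, b, hab⟩ := exists_affine_minorant φ hconv
  set S : Set ℝ := {v : ℝ | ∃ γ : Fin m → ℝ, (∀ i, 0 ≤ γ i) ∧ ∑ i, γ i = 1 ∧
      v = ∑ i, γ i * f i - (η / m) * ∑ i, φ (m * γ i)} with hS
  set T : Set ℝ := {v : ℝ | ∃ μ : ℝ, (∀ i, conjE (f i - μ) ≠ ⊤) ∧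
      v = μ + (1 / m) * ∑ i, (conjE (f i - μ)).toReal} with hT
  set V : ℝ → Set ℝ := fun c => {v : ℝ | ∃ x : Fin m → ℝ, (∀ i, 0 ≤ x i) ∧ ∑ i, x i = c ∧
      v = (1 / m) * ∑ i, (x i * f i - η * φ (x i))} with hV
  set B : ℝ := (∑ i, |f i|) + η * |a| with hB
  -- upper bound on values in V c
  have hVub : ∀ c : ℝ, ∀ v ∈ V c, v ≤ (c * B - (m:ℝ) * (η * b)) / m := by
    intro c v hv
    obtain ⟨x, hx0, hxs, rfl⟩ := hv
    have hterm : ∀ i, x i * f i - η * φ (x i) ≤ x i * B - η * b := by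
      intro i
      have h1 : a * x i + b ≤ φ (x i) := hab _ (hx0 i)
      have h2 : f i ≤ ∑ j, |f j| := by
        have h := Finset.single_le_sum (fun j (_ : j ∈ Finset.univ) => abs_nonneg (f j))
          (Finset.mem_univ i)
        linarith [le_abs_self (f i)]
      have h3 : -(η * a) ≤ η * |a| := by
        have : -a ≤ |a| := neg_le_abs a
        nlinarith
      have p1 := mul_le_mul_of_nonneg_left h2 (hx0 i)
      have p2 := mul_le_mul_of_nonneg_left h1 hη.le
      have p3 := mul_le_mul_of_nonneg_left h3 (hx0 i)
      have p4 : x i * B = x i * (∑ j, |f j|) + x i * (η * |a|) := by rw [hB]; ring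
      linarith [p1, p2, p3, p4]
    have hsum : ∑ i, (x i * f i - η * φ (x i)) ≤ ∑ i, (x i * B - η * b) :=
      Finset.sum_le_sum (fun i _ => hterm i)
    have hs2 : ∑ i, (x i * B - η * b) = c * B - (m:ℝ) * (η * b) := by
      rw [Finset.sum_sub_distrib, ← Finset.sum_mul, hxs, Finset.sum_const, Finset.card_univ,
        Fintype.card_fin, nsmul_eq_mul]
    have h4 := mul_le_mul_of_nonneg_left (hsum.trans hs2.le)
      (by positivity : (0:ℝ) ≤ 1/(m:ℝ))
    have h5 : (1/(m:ℝ)) * (c * B - (m:ℝ) * (η * b)) = (c * B - (m:ℝ) * (η * b)) / m := by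
      ring
    linarith [h4]
  have hVbdd : ∀ c : ℝ, BddAbove (V c) := fun c => ⟨_, fun v hv => hVub c v hv⟩
  have hVne : ∀ c : ℝ, 0 ≤ c → (V c).Nonempty := by
    intro c hc
    refine ⟨_, fun _ => c / m, fun i => by positivity, ?_, rfl⟩
    rw [Finset.sum_const, Finset.card_univ, Fintype.card_fin, nsmul_eq_mul]
    field_simp
  set G : ℝ → ℝ := fun c => sSup (V c) with hG
  have hle_G : ∀ c : ℝ, ∀ v ∈ V c, v ≤ G c := fun c v hv => le_csSup (hVbdd c) hv
  -- concavity
  have hGconc : ∀ c1 c2 t : ℝ, 0 ≤ c1 → 0 ≤ c2 → 0 ≤ t → t ≤ 1 →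
      t * G c1 + (1 - t) * G c2 ≤ G (t * c1 + (1 - t) * c2) := by
    intro c1 c2 t hc1 hc2 ht0 ht1
    have key : ∀ v1 ∈ V c1, ∀ v2 ∈ V c2, t * v1 + (1 - t) * v2 ≤ G (t * c1 + (1 - t) * c2) := by
      rintro v1 ⟨x, hx0, hxs, rfl⟩ v2 ⟨y, hy0, hys, rfl⟩
      set z : Fin m → ℝ := fun i => t * x i + (1 - t) * y i with hz
      have hz0 : ∀ i, 0 ≤ z i := fun i => by
        have := hx0 i; have := hy0 i; rw [hz]; dsimp; nlinarith
      have hzs : ∑ i, z i = t * c1 + (1 - t) * c2 := by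
        rw [hz]; rw [Finset.sum_add_distrib, ← Finset.mul_sum, ← Finset.mul_sum, hxs, hys]
      have hmem : (1 / (m:ℝ)) * ∑ i, (z i * f i - η * φ (z i)) ∈ V (t * c1 + (1 - t) * c2) :=
        ⟨z, hz0, hzs, rfl⟩
      refine le_trans ?_ (hle_G _ _ hmem)
      have hterm : ∀ i, t * (x i * f i - η * φ (x i)) + (1 - t) * (y i * f i - η * φ (y i))
          ≤ z i * f i - η * φ (z i) := by
        intro i
        have hcvx := hconv.2 (mem_Ici.2 (hx0 i)) (mem_Ici.2 (hy0 i)) ht0 (by linarith)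
          (by ring : t + (1 - t) = 1)
        simp only [smul_eq_mul] at hcvx
        have : η * φ (t * x i + (1 - t) * y i) ≤ η * (t * φ (x i) + (1 - t) * φ (y i)) :=
          mul_le_mul_of_nonneg_left hcvx hη.le
        rw [hz]; dsimp; nlinarith
      have hsum : ∑ i, (t * (x i * f i - η * φ (x i)) + (1 - t) * (y i * f i - η * φ (y i)))
          ≤ ∑ i, (z i * f i - η * φ (z i)) :=
        Finset.sum_le_sum (fun i _ => hterm i)
      have hsplit : ∑ i, (t * (x i * f i - η * φ (x i)) + (1 - t) * (y i * f i - η * φ (y i)))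
          = t * ∑ i, (x i * f i - η * φ (x i)) + (1 - t) * ∑ i, (y i * f i - η * φ (y i)) := by
        rw [Finset.sum_add_distrib, ← Finset.mul_sum, ← Finset.mul_sum]
      rw [hsplit] at hsum
      have := mul_le_mul_of_nonneg_left hsum (by positivity : (0:ℝ) ≤ 1/m)
      calc t * ((1 / (m:ℝ)) * ∑ i, (x i * f i - η * φ (x i)))
            + (1 - t) * ((1 / (m:ℝ)) * ∑ i, (y i * f i - η * φ (y i)))
          = (1/(m:ℝ)) * (t * ∑ i, (x i * f i - η * φ (x i))
            + (1 - t) * ∑ i, (y i * f i - η * φ (y i))) := by ring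
        _ ≤ (1 / (m:ℝ)) * ∑ i, (z i * f i - η * φ (z i)) := this
    rcases eq_or_lt_of_le ht0 with rfl | ht0'
    · have h2 := hVne c2 hc2
      simp only [zero_mul, sub_zero, one_mul, zero_add]
      simp only [zero_mul, sub_zero, one_mul, zero_add] at key ⊢
      exact le_rfl
    rcases eq_or_lt_of_le ht1 with rfl | ht1'
    · simp only [one_mul, sub_self, zero_mul, add_zero]
      exact le_rfl
    set X := G (t * c1 + (1 - t) * c2) with hX
    have h1 : G c1 ≤ (X - (1 - t) * G c2) / t := by
      refine csSup_le (hVne c1 hc1) (fun v1 hv1 => ?_)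
      rw [le_div_iff₀ ht0']
      have h2 : G c2 ≤ (X - t * v1) / (1 - t) := by
        refine csSup_le (hVne c2 hc2) (fun v2 hv2 => ?_)
        rw [le_div_iff₀ (by linarith)]
        linarith [key v1 hv1 v2 hv2]
      rw [le_div_iff₀ (by linarith : (0:ℝ) < 1 - t)] at h2
      linarith
    rw [le_div_iff₀ ht0'] at h1
    linarith
  -- three-point slope inequality
  have hG3 : ∀ x y z : ℝ, 0 ≤ x → x < y → y < z →
      (G z - G y) * (y - x) ≤ (G y - G x) * (z - y) := by
    intro x y z hx hxy hyz
    set t : ℝ := (z - y) / (z - x) with ht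
    have hzx : (0:ℝ) < z - x := by linarith
    have ht0 : 0 ≤ t := div_nonneg (by linarith) (by linarith)
    have ht1 : t ≤ 1 := by rw [ht, div_le_one hzx]; linarith
    have hcomb : t * x + (1 - t) * z = y := by rw [ht]; field_simp; ring
    have h := hGconc x z t hx (by linarith) ht0 ht1
    rw [hcomb] at h
    have h2 := mul_le_mul_of_nonneg_right h hzx.le
    have ht' : t * (z - x) = z - y := by rw [ht]; field_simp
    have ht'' : (1 - t) * (z - x) = y - x := by nlinarith [ht']
    have h3 : (z - y) * G x + (y - x) * G z ≤ (z - x) * G y := by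
      calc (z - y) * G x + (y - x) * G z
          = (t * G x + (1 - t) * G z) * (z - x) := by rw [← ht', ← ht'']; ring
        _ ≤ G y * (z - x) := h2
        _ = (z - x) * G y := by ring
    nlinarith [h3]
  -- supergradient of G at m
  set R : Set ℝ := {r : ℝ | ∃ c : ℝ, (m:ℝ) < c ∧ r = (G c - G (m:ℝ)) / (c - m)} with hR
  have hRne : R.Nonempty := ⟨_, (m:ℝ) + 1, by linarith, rfl⟩
  have hRub : ∀ r ∈ R, r ≤ G (m:ℝ) - G ((m:ℝ) - 1) := by
    rintro r ⟨c, hc, rfl⟩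
    have h3 := hG3 ((m:ℝ) - 1) (m:ℝ) c (by linarith) (by linarith) hc
    rw [div_le_iff₀ (by linarith : (0:ℝ) < c - (m:ℝ))]
    nlinarith [h3]
  set k : ℝ := sSup R with hk
  have hkub : ∀ c : ℝ, (m:ℝ) < c → G c ≤ G (m:ℝ) + k * (c - m) := by
    intro c hc
    have hmem : (G c - G (m:ℝ)) / (c - m) ∈ R := ⟨c, hc, rfl⟩
    have h1 : (G c - G (m:ℝ)) / (c - m) ≤ k := le_csSup ⟨_, hRub⟩ hmem
    rw [div_le_iff₀ (by linarith : (0:ℝ) < c - (m:ℝ))] at h1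
    linarith
  have hklb : ∀ c : ℝ, 0 ≤ c → c < (m:ℝ) → G c ≤ G (m:ℝ) + k * (c - m) := by
    intro c hc0 hc
    have h1 : k ≤ (G (m:ℝ) - G c) / ((m:ℝ) - c) := by
      refine csSup_le hRne ?_
      rintro r ⟨c', hc', rfl⟩
      have h3 := hG3 c (m:ℝ) c' hc0 hc hc'
      rw [div_le_div_iff₀ (by linarith : (0:ℝ) < c' - (m:ℝ))
        (by linarith : (0:ℝ) < (m:ℝ) - c)]
      nlinarith [h3]
    rw [le_div_iff₀ (by linarith : (0:ℝ) < (m:ℝ) - c)] at h1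
    nlinarith [h1]
  have hkall : ∀ c : ℝ, 0 ≤ c → G c ≤ G (m:ℝ) + k * (c - m) := by
    intro c hc0
    rcases lt_trichotomy c (m:ℝ) with h | h | h
    · exact hklb c hc0 h
    · subst h; simp
    · exact hkub c h
  set μ : ℝ := (m:ℝ) * k with hμ
  -- single-coordinate bound (dual feasibility)
  have hsingle : ∀ (i : Fin m) (s : ℝ), 0 ≤ s →
      (f i - μ) * s - η * φ s ≤ (m:ℝ) * G (m:ℝ) - (m:ℝ) * μ + η * ((m:ℝ) - 1) * φ 0 := by
    intro i s hs
    set x : Fin m → ℝ := fun j => if j = i then s else 0 with hx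
    have hx0 : ∀ j, 0 ≤ x j := fun j => by rw [hx]; dsimp; split <;> simp [hs]
    have hxs : ∑ j, x j = s := by rw [hx]; simp
    have hterm : ∀ j, x j * f j - η * φ (x j)
        = (-(η * φ 0)) + (if j = i then s * f i - η * φ s + η * φ 0 else 0) := by
      intro j
      rw [hx]; dsimp only
      by_cases h : j = i
      · subst h; simp; try ring
      · simp [h]
    have hsum : ∑ j, (x j * f j - η * φ (x j))
        = s * f i - η * φ s + ((m:ℝ) - 1) * (-(η * φ 0)) := by
      rw [Finset.sum_congr rfl (fun j _ => hterm j), Finset.sum_add_distrib,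
        Finset.sum_const, Finset.card_univ, Fintype.card_fin, nsmul_eq_mul,
        Finset.sum_ite_eq' Finset.univ i]
      simp; ring
    have hmem : (1 / (m:ℝ)) * ∑ j, (x j * f j - η * φ (x j)) ∈ V s := ⟨x, hx0, hxs, rfl⟩
    have h1 : (1 / (m:ℝ)) * ∑ j, (x j * f j - η * φ (x j)) ≤ G (m:ℝ) + k * (s - m) :=
      (hle_G s _ hmem).trans (hkall s hs)
    rw [hsum] at h1
    have h2 := mul_le_mul_of_nonneg_left h1 hm'.le
    have h3 : (m:ℝ) * ((1 / (m:ℝ)) * (s * f i - η * φ s + ((m:ℝ) - 1) * (-(η * φ 0))))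
        = s * f i - η * φ s + ((m:ℝ) - 1) * (-(η * φ 0)) := by
      field_simp
    rw [h3] at h2
    have h4 : (m:ℝ) * (G (m:ℝ) + k * (s - (m:ℝ))) = (m:ℝ) * G (m:ℝ) + μ * s - (m:ℝ) * μ := by
      rw [hμ]; ring
    rw [h4] at h2
    nlinarith [h2]
  have hfeas : ∀ i, conjE (f i - μ) ≠ ⊤ := by
    intro i
    rw [hconjE]
    refine ne_top_of_le_ne_top (EReal.coe_ne_top
      ((m:ℝ) * G (m:ℝ) - (m:ℝ) * μ + η * ((m:ℝ) - 1) * φ 0)) ?_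
    exact iSup_le fun s => EReal.coe_le_coe_iff.mpr (hsingle i s.1 s.2)
  have hbot : ∀ (μ' : ℝ) (i : Fin m), conjE (f i - μ') ≠ ⊥ := by
    intro μ' i
    rw [hconjE]
    refine ne_bot_of_le_ne_bot (EReal.coe_ne_bot ((f i - μ') * 1 - η * φ 1)) ?_
    exact le_iSup (fun s : {s : ℝ // 0 ≤ s} => (((f i - μ') * s.1 - η * φ s.1 : ℝ) : EReal))
      ⟨1, zero_le_one⟩
  -- weak duality
  have hweak : ∀ v ∈ S, ∀ w ∈ T, v ≤ w := by
    rintro v ⟨γ, hγ0, hγ1, rfl⟩ w ⟨μ', hfin', rfl⟩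
    have hterm : ∀ i, (f i - μ') * ((m:ℝ) * γ i) - η * φ ((m:ℝ) * γ i)
        ≤ (conjE (f i - μ')).toReal := by
      intro i
      have h1 : (((f i - μ') * ((m:ℝ) * γ i) - η * φ ((m:ℝ) * γ i) : ℝ) : EReal)
          ≤ conjE (f i - μ') := by
        rw [hconjE]
        exact le_iSup (fun s : {s : ℝ // 0 ≤ s} =>
          (((f i - μ') * s.1 - η * φ s.1 : ℝ) : EReal))
          ⟨(m:ℝ) * γ i, mul_nonneg hm'.le (hγ0 i)⟩
      have h2 := h1.trans (EReal.le_coe_toReal (hfin' i))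
      exact_mod_cast h2
    have hsum : ∑ i, ((f i - μ') * ((m:ℝ) * γ i) - η * φ ((m:ℝ) * γ i))
        ≤ ∑ i, (conjE (f i - μ')).toReal := Finset.sum_le_sum (fun i _ => hterm i)
    have hkey : ∑ i, γ i * f i - (η / m) * ∑ i, φ ((m:ℝ) * γ i)
        = μ' + (1 / (m:ℝ)) * ∑ i, ((f i - μ') * ((m:ℝ) * γ i) - η * φ ((m:ℝ) * γ i)) := by
      have hpt : ∀ i, (1 / (m:ℝ)) * ((f i - μ') * ((m:ℝ) * γ i) - η * φ ((m:ℝ) * γ i))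
          = γ i * f i - μ' * γ i - (η / m) * φ ((m:ℝ) * γ i) := by
        intro i; field_simp
      have h1 : (1/(m:ℝ)) * ∑ i, ((f i - μ') * ((m:ℝ) * γ i) - η * φ ((m:ℝ) * γ i))
          = ∑ i, (γ i * f i - μ' * γ i - (η / m) * φ ((m:ℝ) * γ i)) := by
        rw [Finset.mul_sum]
        exact Finset.sum_congr rfl (fun i _ => hpt i)
      have h2 : ∑ i, (γ i * f i - μ' * γ i - (η / m) * φ ((m:ℝ) * γ i))
          = ∑ i, γ i * f i - μ' * ∑ i, γ i - (η / m) * ∑ i, φ ((m:ℝ) * γ i) := by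
        rw [Finset.sum_sub_distrib, Finset.sum_sub_distrib, Finset.mul_sum, Finset.mul_sum]
      rw [h1, h2, hγ1]
      ring
    rw [hkey]
    have := mul_le_mul_of_nonneg_left hsum (by positivity : (0:ℝ) ≤ 1/(m:ℝ))
    linarith
  -- nonemptiness of S
  have hSne : S.Nonempty := by
    refine ⟨_, fun _ => 1 / (m:ℝ), fun i => by positivity, ?_, rfl⟩
    rw [Finset.sum_const, Finset.card_univ, Fintype.card_fin, nsmul_eq_mul]
    field_simp
  -- the dual witness and strong duality
  set r : Fin m → ℝ := fun i => (conjE (f i - μ)).toReal with hr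
  have hwT : μ + (1 / (m:ℝ)) * ∑ i, r i ∈ T := ⟨μ, hfeas, rfl⟩
  have hTne : T.Nonempty := ⟨_, hwT⟩
  have hwle : μ + (1 / (m:ℝ)) * ∑ i, r i ≤ G (m:ℝ) := by
    have hmain : ∀ ε : ℝ, 0 < ε → μ + (1 / (m:ℝ)) * ∑ i, r i ≤ G (m:ℝ) + ε := by
      intro ε hε
      have hex : ∀ i : Fin m, ∃ s : ℝ, 0 ≤ s ∧ r i - ε < (f i - μ) * s - η * φ s := by
        intro i
        have h1 : conjE (f i - μ) = ((r i : ℝ) : EReal) :=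
          (EReal.coe_toReal (hfeas i) (hbot μ i)).symm
        have h2 : ((r i - ε : ℝ) : EReal) < conjE (f i - μ) := by
          rw [h1]; exact_mod_cast sub_lt_self (r i) hε
        rw [hconjE, lt_iSup_iff] at h2
        obtain ⟨s, hs⟩ := h2
        exact ⟨s.1, s.2, EReal.coe_lt_coe_iff.mp hs⟩
      choose sfun hs0 hsgt using hex
      set c : ℝ := ∑ i, sfun i with hc
      have hc0 : 0 ≤ c := Finset.sum_nonneg (fun i _ => hs0 i)
      have hmem : (1 / (m:ℝ)) * ∑ i, (sfun i * f i - η * φ (sfun i)) ∈ V c :=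
        ⟨sfun, hs0, rfl, rfl⟩
      have h1 : (1 / (m:ℝ)) * ∑ i, (sfun i * f i - η * φ (sfun i))
          ≤ G (m:ℝ) + k * (c - m) := (hle_G c _ hmem).trans (hkall c hc0)
      have h2 : ∑ i, (r i - ε) ≤ ∑ i, ((f i - μ) * sfun i - η * φ (sfun i)) :=
        Finset.sum_le_sum (fun i _ => (hsgt i).le)
      have h3 : ∑ i, ((f i - μ) * sfun i - η * φ (sfun i))
          = ∑ i, (sfun i * f i - η * φ (sfun i)) - μ * c := by
        rw [hc, Finset.mul_sum, ← Finset.sum_sub_distrib]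
        exact Finset.sum_congr rfl (fun i _ => by ring)
      have h4 : ∑ i, (r i - ε) = ∑ i, r i - (m:ℝ) * ε := by
        rw [Finset.sum_sub_distrib, Finset.sum_const, Finset.card_univ, Fintype.card_fin,
          nsmul_eq_mul]
      have h5 := mul_le_mul_of_nonneg_left h1 hm'.le
      have h6 : (m:ℝ) * ((1 / (m:ℝ)) * ∑ i, (sfun i * f i - η * φ (sfun i)))
          = ∑ i, (sfun i * f i - η * φ (sfun i)) := by field_simp
      rw [h6] at h5
      have h7 : (m:ℝ) * (G (m:ℝ) + k * (c - (m:ℝ)))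
          = (m:ℝ) * G (m:ℝ) + μ * c - (m:ℝ) * μ := by rw [hμ]; ring
      rw [h7] at h5
      have h8 : ∑ i, r i ≤ (m:ℝ) * G (m:ℝ) - (m:ℝ) * μ + (m:ℝ) * ε := by
        rw [h4] at h2; rw [h3] at h2; linarith
      have h9 := mul_le_mul_of_nonneg_left h8 (by positivity : (0:ℝ) ≤ 1/(m:ℝ))
      have h10 : (1 / (m:ℝ)) * ((m:ℝ) * G (m:ℝ) - (m:ℝ) * μ + (m:ℝ) * ε)
          = G (m:ℝ) - μ + ε := by field_simp
      rw [h10] at h9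
      linarith
    by_contra hcon
    push_neg at hcon
    have := hmain ((μ + (1 / (m:ℝ)) * ∑ i, r i - G (m:ℝ)) / 2) (by linarith)
    linarith
  -- identify sSup S with G m
  have hSV : S = V (m:ℝ) := by
    ext v
    constructor
    · rintro ⟨γ, hγ0, hγ1, rfl⟩
      refine ⟨fun i => (m:ℝ) * γ i, fun i => mul_nonneg hm'.le (hγ0 i), ?_, ?_⟩
      · rw [← Finset.mul_sum, hγ1, mul_one]
      · have hpt : ∀ i, (1 / (m:ℝ)) * (((m:ℝ) * γ i) * f i - η * φ ((m:ℝ) * γ i))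
            = γ i * f i - (η / m) * φ ((m:ℝ) * γ i) := by
          intro i; field_simp
        have h1 : (1/(m:ℝ)) * ∑ i, (((m:ℝ) * γ i) * f i - η * φ ((m:ℝ) * γ i))
            = ∑ i, (γ i * f i - (η / m) * φ ((m:ℝ) * γ i)) := by
          rw [Finset.mul_sum]
          exact Finset.sum_congr rfl (fun i _ => hpt i)
        rw [h1, Finset.sum_sub_distrib, Finset.mul_sum]
    · rintro ⟨x, hx0, hxs, rfl⟩
      refine ⟨fun i => x i / (m:ℝ), fun i => div_nonneg (hx0 i) hm'.le, ?_, ?_⟩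
      · rw [← Finset.sum_div, hxs]; field_simp
      · have hmx : ∀ i, (m:ℝ) * (x i / (m:ℝ)) = x i := fun i => by field_simp
        have hpt : ∀ i, (x i / (m:ℝ)) * f i - (η / m) * φ ((m:ℝ) * (x i / (m:ℝ)))
            = (1 / (m:ℝ)) * (x i * f i - η * φ (x i)) := by
          intro i; rw [hmx i]; field_simp; try ring
        symm
        calc ∑ i, (x i / (m:ℝ)) * f i - (η / m) * ∑ i, φ ((m:ℝ) * (x i / (m:ℝ)))
            = ∑ i, ((x i / (m:ℝ)) * f i - (η / m) * φ ((m:ℝ) * (x i / (m:ℝ)))) := by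
              rw [Finset.mul_sum, Finset.sum_sub_distrib]
          _ = ∑ i, (1 / (m:ℝ)) * (x i * f i - η * φ (x i)) :=
              Finset.sum_congr rfl (fun i _ => hpt i)
          _ = (1 / (m:ℝ)) * ∑ i, (x i * f i - η * φ (x i)) := by rw [Finset.mul_sum]
  have hTbdd : BddBelow T := by
    obtain ⟨v0, hv0⟩ := hSne
    exact ⟨v0, fun w hw => hweak v0 hv0 w hw⟩
  have hfinal1 : sSup S ≤ sInf T :=
    csSup_le hSne (fun v hv => le_csInf hTne (fun w hw => hweak v hv w hw))
  have hfinal2 : sInf T ≤ sSup S := by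
    have h1 : sInf T ≤ μ + (1 / (m:ℝ)) * ∑ i, r i := csInf_le hTbdd hwT
    have h2 : G (m:ℝ) = sSup S := by rw [hSV]
    linarith [hwle, h2.ge, h2.le]
  exact le_antisymm hfinal1 hfinal2
end

section
/- Let γ ∈ Δ^m be a probability vector with m even, and let I be a uniformly random subset of {1,…,m} of size m/2. Then E[(∑_{i∈I} γ_i − 1/2)²] ≤ (1/(2m))·D_{χ²}(γ, (1/m)𝟙), where D_{χ²}(γ, u) = ∑_i u_i·(γ_i/u_i − 1)² is the chi-squared divergence between γ and the uniform vector u = (1/m,…,1/m). -/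
/-!
Put `δ = γ - 1/m`. Then `∑ δ = 0` and, since `|I| = m/2`, `∑_{i∈I} γ i - 1/2 = ∑_{i∈I} δ i`.
Expanding the square, the sum over all `k`-subsets `I` is `∑_{i,j} c({i,j}) δ i δ j`, where
`c(s)` counts the `k`-subsets containing `s`; it is `c₁` on the diagonal and `c₂` off it, so the
sum equals `c₂ (∑ δ)² + (c₁ - c₂) ∑ δ² ≤ c₁ ∑ δ²`. Finally `c₁ / C(m, k) = k/m = 1/2`.
-/

open Finset

/-- The number of `k`-subsets of an `n`-set containing a fixed `c`-set. -/
def supersetCount (n k c : ℕ) : ℕ := if c ≤ k then (n - c).choose (k - c) else 0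

theorem card_filter_powersetCard_subset_eq_supersetCount {α : Type*} [DecidableEq α]
    {s t : Finset α} (hst : s ⊆ t) (k : ℕ) :
    #{I ∈ t.powersetCard k | s ⊆ I} = supersetCount #t k #s := by
  unfold supersetCount
  split_ifs with hsk
  · exact card_filter_powersetCard_subset s t k hst hsk
  · refine card_eq_zero.2 (filter_eq_empty_iff.2 fun I hI hsI => hsk ?_)
    exact (card_le_card hsI).trans (mem_powersetCard.1 hI).2.le

theorem mul_supersetCount_one (n k : ℕ) : n * supersetCount n k 1 = k * n.choose k := by
  unfold supersetCount
  split_ifs with hk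
  · obtain ⟨j, rfl⟩ := Nat.exists_eq_add_of_le' hk
    cases n with
    | zero => simp
    | succ n => simpa [mul_comm] using Nat.add_one_mul_choose_eq n j
  · simp [show k = 0 by omega]

theorem supersetCount_one_div_choose {n k : ℕ} (hk : k ≤ n) :
    (supersetCount n k 1 : ℝ) / n.choose k = k / n := by
  rcases n.eq_zero_or_pos with rfl | hn
  · simp [supersetCount, show k = 0 by omega]
  · have hC : (0 : ℝ) < n.choose k := by exact_mod_cast Nat.choose_pos hk
    rw [div_eq_div_iff hC.ne' (by positivity)]
    exact_mod_cast (mul_comm _ _).trans (mul_supersetCount_one n k)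

section

variable {α : Type*} [Fintype α] [DecidableEq α]

theorem sq_sum_eq_sum_sum_ite_pair_subset {R : Type*} [CommSemiring R] (I : Finset α)
    (f : α → R) :
    (∑ i ∈ I, f i) ^ 2 = ∑ i, ∑ j, if {i, j} ⊆ I then f i * f j else 0 := by
  have h : ∑ i ∈ I, f i = ∑ i, if i ∈ I then f i else 0 := by rw [sum_ite_mem, univ_inter]
  simp only [h, sq, sum_mul_sum, ite_zero_mul_ite_zero, insert_subset_iff, singleton_subset_iff]

theorem sum_sq_sum_eq_sum_card_filter_pair_subset {R : Type*} [CommSemiring R]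
    (P : Finset (Finset α)) (f : α → R) :
    ∑ I ∈ P, (∑ i ∈ I, f i) ^ 2 = ∑ i, ∑ j, (#{I ∈ P | {i, j} ⊆ I} : R) * (f i * f j) := by
  simp only [sq_sum_eq_sum_sum_ite_pair_subset, natCast_card_filter, sum_mul, ite_mul, one_mul,
    zero_mul]
  rw [sum_comm]
  exact sum_congr rfl fun i _ => sum_comm

theorem sum_powersetCard_sq_sum (k : ℕ) (f : α → ℝ) :
    ∑ I ∈ powersetCard k univ, (∑ i ∈ I, f i) ^ 2
      = supersetCount (Fintype.card α) k 2 * (∑ i, f i) ^ 2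
        + (supersetCount (Fintype.card α) k 1 - supersetCount (Fintype.card α) k 2 : ℝ)
          * ∑ i, f i ^ 2 := by
  set c₁ : ℝ := (supersetCount (Fintype.card α) k 1 : ℝ)
  set c₂ : ℝ := (supersetCount (Fintype.card α) k 2 : ℝ)
  have hcount : ∀ i j : α, (#{I ∈ powersetCard k univ | {i, j} ⊆ I} : ℝ)
      = c₂ + if i = j then c₁ - c₂ else 0 := by
    intro i j
    rw [card_filter_powersetCard_subset_eq_supersetCount (subset_univ _), card_univ]
    split_ifs with hij
    · simp [hij, c₁]
    · simp [card_pair hij, c₂]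
  rw [sum_sq_sum_eq_sum_card_filter_pair_subset]
  simp only [hcount, add_mul, sum_add_distrib, ite_mul, zero_mul, sum_ite_eq, mem_univ, if_true,
    ← mul_sum, ← sum_mul, sq]

theorem sum_powersetCard_sq_sum_div_card_le {k : ℕ} (hk : k ≤ Fintype.card α) {f : α → ℝ}
    (hf : ∑ i, f i = 0) :
    (∑ I ∈ powersetCard k univ, (∑ i ∈ I, f i) ^ 2) / #(powersetCard k (univ : Finset α))
      ≤ k / Fintype.card α * ∑ i, f i ^ 2 := by
  have hsq : 0 ≤ ∑ i, f i ^ 2 := sum_nonneg fun i _ => sq_nonneg (f i)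
  rw [sum_powersetCard_sq_sum, hf, card_powersetCard, card_univ,
    ← supersetCount_one_div_choose hk, div_mul_eq_mul_div]
  gcongr
  nlinarith [(supersetCount (Fintype.card α) k 2).cast_nonneg (α := ℝ)]

end

theorem stmt8_general (m : ℕ) (hm : Even m) (γ : Fin m → ℝ)
    (hγ1 : ∑ i, γ i = 1) :
    (∑ I ∈ (Finset.univ : Finset (Fin m)).powersetCard (m / 2),
        (∑ i ∈ I, γ i - 1 / 2) ^ 2)
        / ((((Finset.univ : Finset (Fin m)).powersetCard (m / 2)).card : ℝ))
      ≤ (1 / (2 * m)) * (m * ∑ i, (γ i - 1 / m) ^ 2) := by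
  obtain ⟨k, rfl⟩ := hm
  have hk0 : (k : ℝ) ≠ 0 := by
    rintro hk
    obtain rfl : k = 0 := by exact_mod_cast hk
    simp at hγ1
  rw [show (k + k) / 2 = k by omega]
  have hδ : ∑ i, (γ i - 1 / (k + k : ℕ)) = 0 := by
    simp [sum_sub_distrib, hγ1, hk0]
  have hshift : ∀ I ∈ powersetCard k (univ : Finset (Fin (k + k))),
      ∑ i ∈ I, γ i - 1 / 2 = ∑ i ∈ I, (γ i - 1 / (k + k : ℕ)) := by
    intro I hI
    rw [sum_sub_distrib, sum_const, (mem_powersetCard.1 hI).2, nsmul_eq_mul]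
    push_cast
    field_simp
    ring
  rw [sum_congr rfl fun I hI => by rw [hshift I hI]]
  calc _ ≤ (k : ℝ) / Fintype.card (Fin (k + k)) * ∑ i, (γ i - 1 / (k + k : ℕ)) ^ 2 :=
        sum_powersetCard_sq_sum_div_card_le (by simp) hδ
    _ = _ := by
      rw [Fintype.card_fin]
      push_cast
      field_simp
      ring

/-- for a probability vector `γ ∈ Δ^m` with `m` even and a uniformly random
subset `I ⊆ {1,…,m}` of size `m/2`, `E[(∑_{i∈I} γ_i − 1/2)²] ≤ (1/(2m))·D_{χ²}(γ, 1/m·𝟙)`,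
where `D_{χ²}(γ, (1/m)𝟙) = m·∑_i (γ_i − 1/m)²`.  The expectation is the average over all
subsets of `Fin m` of cardinality `m/2`. -/
theorem stmt8 (m : ℕ) (hm : Even m) (γ : Fin m → ℝ)
    (hγ0 : ∀ i, 0 ≤ γ i) (hγ1 : ∑ i, γ i = 1) :
    (∑ I ∈ (Finset.univ : Finset (Fin m)).powersetCard (m / 2),
        (∑ i ∈ I, γ i - 1 / 2) ^ 2)
        / ((((Finset.univ : Finset (Fin m)).powersetCard (m / 2)).card : ℝ))
      ≤ (1 / (2 * m)) * (m * ∑ i, (γ i - 1 / m) ^ 2) :=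
  stmt8_general m hm γ hγ1
end

section
/- Let ν be a probability measure and f a bounded measurable function. Suppose φ is convex, lower semi-continuous, φ(1)=0, φ(x)=∞ for x<0, and lim_{t→∞} φ(t)/t = C < ∞. Then for any η > 0, any minimizer μ* of μ ↦ μ + E_{z∼ν}[(ηφ)^*(f(z) − μ)] satisfies μ* ≥ ess-sup_ν f − η·C. -/
open MeasureTheory Filter
open scoped Classical

/-- let `φ` be convex lsc with `φ(1)=0` (and `+∞` on negatives, encoded by
taking the conjugate sup over `s ≥ 0`), with `lim_{t→∞} φ(t)/t = C < ∞`.  The extended-real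
objective `Obj μ = μ + E_ν[(ηφ)^*(f − μ)]` (equal to `+∞` unless `(ηφ)^*(f−μ)` is a.e. finite
and integrable; the integrand is bounded below, so this matches the extended integral).
Any minimizer `μ*` of `Obj` satisfies `μ* ≥ ess-sup_ν f − η·C`. -/
theorem stmt11 {Z : Type*} [MeasurableSpace Z] (ν : Measure Z) [IsProbabilityMeasure ν]
    (f : Z → ℝ) (hf : Measurable f) (B : ℝ) (hfB : ∀ z, |f z| ≤ B)
    (φ : ℝ → ℝ) (hconv : ConvexOn ℝ (Set.Ici 0) φ)
    (hlsc : LowerSemicontinuousOn φ (Set.Ici 0)) (hφ1 : φ 1 = 0)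
    (C : ℝ) (hC : Tendsto (fun t => φ t / t) atTop (nhds C))
    (η : ℝ) (hη : 0 < η)
    (conjE : ℝ → EReal)
    (hconjE : ∀ t : ℝ, conjE t = ⨆ s : {s : ℝ // 0 ≤ s}, ((t * s.1 - η * φ s.1 : ℝ) : EReal))
    (Obj : ℝ → EReal)
    (hObj : ∀ μ : ℝ, Obj μ =
      if (∀ᵐ z ∂ν, conjE (f z - μ) ≠ ⊤) ∧
          Integrable (fun z => (conjE (f z - μ)).toReal) ν
        then ((μ + ∫ z, (conjE (f z - μ)).toReal ∂ν : ℝ) : EReal) else ⊤)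
    (μstar : ℝ) (hmin : ∀ μ : ℝ, Obj μstar ≤ Obj μ) :
    essSup f ν - η * C ≤ μstar := by
  set K : ℝ := |φ 0| + |φ 2| with hKdef
  have hK0 : 0 ≤ K := by positivity
  -- linear lower bound on φ over [0, ∞)
  have hlow : ∀ s : ℝ, 0 ≤ s → -K * (1 + s) ≤ φ s := by
    intro s hs
    rcases lt_trichotomy s 1 with h1 | h1 | h1
    · have hsl := hconv.slope_mono_adjacent (Set.mem_Ici.2 hs)
        (Set.mem_Ici.2 (by norm_num : (0:ℝ) ≤ 2)) h1 (by norm_num)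
      rw [hφ1] at hsl
      have h1s : (0:ℝ) < 1 - s := by linarith
      have h3 : 0 - φ s ≤ (φ 2 - 0) / (2 - 1) * (1 - s) := (div_le_iff₀ h1s).1 hsl
      have h4 : φ 2 ≤ |φ 2| := le_abs_self _
      nlinarith [abs_nonneg (φ 0), abs_nonneg (φ 2),
        mul_nonneg hs (abs_nonneg (φ 2)), mul_nonneg hs (abs_nonneg (φ 0)),
        mul_nonneg hs (sub_nonneg.2 h4)]
    · rw [h1, hφ1]
      nlinarith [abs_nonneg (φ 0), abs_nonneg (φ 2)]
    · have hsl := hconv.slope_mono_adjacent (Set.mem_Ici.2 (le_refl (0:ℝ)))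
        (Set.mem_Ici.2 hs) one_pos h1
      rw [hφ1] at hsl
      have hs1 : (0:ℝ) < s - 1 := by linarith
      have h3 : (0 - φ 0) / (1 - 0) * (s - 1) ≤ φ s - 0 := (le_div_iff₀ hs1).1 hsl
      have h4 : -|φ 0| ≤ -φ 0 := neg_le_neg (le_abs_self _)
      nlinarith [abs_nonneg (φ 0), abs_nonneg (φ 2),
        mul_nonneg hs (abs_nonneg (φ 2)), mul_nonneg hs (abs_nonneg (φ 0)),
        mul_nonneg hs1.le (sub_nonneg.2 h4)]
  -- upper bound on conjE for very negative arguments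
  have hub : ∀ t : ℝ, t ≤ -(η * K) → conjE t ≤ ((η * K : ℝ) : EReal) := by
    intro t ht
    rw [hconjE]
    refine iSup_le fun s => ?_
    rw [EReal.coe_le_coe_iff]
    have hls := hlow s.1 s.2
    nlinarith [mul_nonneg s.2 (show (0:ℝ) ≤ -(t + η * K) by linarith),
      mul_nonneg hη.le (show (0:ℝ) ≤ φ s.1 + K * (1 + s.1) by nlinarith)]
  -- lower bound on conjE
  have hlb : ∀ t : ℝ, ((-(η * φ 0) : ℝ) : EReal) ≤ conjE t := by
    intro t
    rw [hconjE]
    have h := le_iSup (fun s : {s : ℝ // 0 ≤ s} => ((t * s.1 - η * φ s.1 : ℝ) : EReal))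
      (⟨0, le_refl 0⟩ : {s : ℝ // 0 ≤ s})
    simpa using h
  -- monotonicity and measurability
  have hmono : Monotone conjE := by
    intro a b hab
    rw [hconjE, hconjE]
    refine iSup_mono fun s => ?_
    rw [EReal.coe_le_coe_iff]
    nlinarith [mul_nonneg (sub_nonneg.2 hab) s.2]
  have hmeas : Measurable conjE := hmono.measurable
  set μ0 : ℝ := B + η * K with hμ0def
  have hμ0 : ∀ z, f z - μ0 ≤ -(η * K) := by
    intro z
    have := (abs_le.1 (hfB z)).2
    rw [hμ0def]; linarith
  have hgmeas : Measurable fun z => (conjE (f z - μ0)).toReal :=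
    (hmeas.comp (hf.sub measurable_const)).ereal_toReal
  set M : ℝ := max (η * K) (η * |φ 0|) with hMdef
  have hbdd : ∀ z, |(conjE (f z - μ0)).toReal| ≤ M := by
    intro z
    have h1 := hub _ (hμ0 z)
    have h2 := hlb (f z - μ0)
    have hne_top : conjE (f z - μ0) ≠ ⊤ := ne_top_of_le_ne_top (EReal.coe_ne_top _) h1
    have hne_bot : conjE (f z - μ0) ≠ ⊥ := ne_bot_of_le_ne_bot (EReal.coe_ne_bot _) h2
    have hA := EReal.toReal_le_toReal h1 hne_bot (EReal.coe_ne_top _)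
    have hB2 := EReal.toReal_le_toReal h2 (EReal.coe_ne_bot _) hne_top
    rw [EReal.toReal_coe] at hA hB2
    rw [abs_le]
    constructor
    · have h5 : η * φ 0 ≤ η * |φ 0| := mul_le_mul_of_nonneg_left (le_abs_self _) hη.le
      have h6 : η * |φ 0| ≤ M := le_max_right _ _
      linarith
    · exact hA.trans (le_max_left _ _)
  have hint : Integrable (fun z => (conjE (f z - μ0)).toReal) ν := by
    refine Integrable.mono' (integrable_const M) hgmeas.aestronglyMeasurable ?_
    exact Eventually.of_forall fun z => by simpa [Real.norm_eq_abs] using hbdd z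
  have hObj0 : Obj μ0 ≠ ⊤ := by
    rw [hObj]
    rw [if_pos ⟨Eventually.of_forall fun z =>
      ne_top_of_le_ne_top (EReal.coe_ne_top _) (hub _ (hμ0 z)), hint⟩]
    exact EReal.coe_ne_top _
  -- the condition holds at the minimizer
  have hcond : (∀ᵐ z ∂ν, conjE (f z - μstar) ≠ ⊤) ∧
      Integrable (fun z => (conjE (f z - μstar)).toReal) ν := by
    by_contra h
    have hle := hmin μ0
    rw [hObj μstar, if_neg h] at hle
    exact hObj0 (top_le_iff.1 hle)
  -- conjE is ⊤ above η*C
  have htop : ∀ t : ℝ, η * C < t → conjE t = ⊤ := by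
    intro t ht
    have hD : (0:ℝ) < (t - η * C) / 2 := by linarith
    set D : ℝ := (t - η * C) / 2 with hDdef
    set ε : ℝ := D / η with hεdef
    have hε0 : 0 < ε := div_pos hD hη
    have hev : ∀ᶠ s in atTop, φ s / s < C + ε :=
      hC.eventually_lt_const (by linarith)
    have key : ∀ y : ℝ, ∃ s : ℝ, 0 ≤ s ∧ y < t * s - η * φ s := by
      intro y
      obtain ⟨s, hs1, hs2⟩ :=
        ((eventually_ge_atTop (max 1 ((|y| + 1) / D))).and hev).exists
      have hs1' : (1:ℝ) ≤ s := le_trans (le_max_left _ _) hs1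
      have hsM : (|y| + 1) / D ≤ s := le_trans (le_max_right _ _) hs1
      have hspos : (0:ℝ) < s := by linarith
      refine ⟨s, hspos.le, ?_⟩
      have hφs : φ s < (C + ε) * s := by
        have := (div_lt_iff₀ hspos).1 hs2
        linarith
      have hηε : η * ε = D := by
        rw [hεdef]; field_simp
      have h7 : t * s - η * φ s > t * s - η * ((C + ε) * s) := by
        nlinarith
      have h8 : t * s - η * ((C + ε) * s) = s * D := by
        linear_combination (-s) * hηε + (-2*s) * hDdef
      have h9 : |y| + 1 ≤ s * D := by
        have := (div_le_iff₀ hD).1 hsM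
        linarith
      have h10 : y ≤ |y| := le_abs_self y
      linarith
    rw [EReal.eq_top_iff_forall_lt]
    intro y
    obtain ⟨s, hs0, hys⟩ := key y
    rw [hconjE]
    refine lt_of_lt_of_le ?_
      (le_iSup (fun s : {s : ℝ // 0 ≤ s} => ((t * s.1 - η * φ s.1 : ℝ) : EReal)) ⟨s, hs0⟩)
    exact_mod_cast hys
  have hae : ∀ᵐ z ∂ν, f z ≤ η * C + μstar := by
    filter_upwards [hcond.1] with z hz
    by_contra hlt
    exact hz (htop _ (by linarith))
  haveI : (ae ν).NeBot := ae_neBot.2 (IsProbabilityMeasure.ne_zero ν)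
  have hcb : IsCoboundedUnder (· ≤ ·) (ae ν) f := by
    refine IsBoundedUnder.isCoboundedUnder_le ⟨-B, eventually_map.2 ?_⟩
    exact Eventually.of_forall fun z => (abs_le.1 (hfB z)).1
  have hess : essSup f ν ≤ η * C + μstar := limsup_le_of_le hcb hae
  linarith
end

section
/- Let φ be convex, lower semi-continuous with φ(1)=0, φ(x)=∞ for x<0, and suppose either lim_{t→∞} φ(t)/t < ∞, or lim_{t→∞} φ(t)/t = ∞ with dom(φ)=[0,∞). Let ν be a probability measure, f bounded measurable, and suppose for each η>0 the infimum over μ of μ + E_{z∼ν}[(ηφ)^*(f(z)−μ)] is attained at a finite μ_η^*. Then as η → 0⁺, inf_μ { μ + E_{z∼ν}[(ηφ)^*(f(z)−μ)] } converges to ess-sup_ν f. -/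
/-!
Upper bound: a supporting line `k s - k ≤ φ s` of `φ` at `1` gives `(ηφ)^*(t) ≤ η k`
whenever `t ≤ η k`, so `μ = ess-sup f - η k` has objective at most `ess-sup f`, for every
`η > 0`.
Lower bound: for `a < ess-sup f` the set `A = {f > a}` has mass `p > 0`, and testing the supremum
defining `(ηφ)^*` with `s = p⁻¹ 1_A` bounds every objective value below by
`a - η max (φ p⁻¹) (φ 0)`, which tends to `a` as `η → 0`.
-/

open MeasureTheory Filter
open scoped Classical

theorem ConvexOn.exists_affine_le_of_mem_interior {S : Set ℝ} {f : ℝ → ℝ} {x : ℝ}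
    (hf : ConvexOn ℝ S f) (hx : x ∈ interior S) :
    ∃ k : ℝ, ∀ y ∈ S, f x + k * (y - x) ≤ f y := by
  refine ⟨derivWithin f (Set.Ioi x) x, fun y hy => ?_⟩
  rcases lt_trichotomy x y with hxy | rfl | hyx
  · have hslope := hf.rightDeriv_le_slope_of_mem_interior hx hy hxy
    rw [slope_def_field, le_div_iff₀ (sub_pos.2 hxy)] at hslope
    linarith
  · simp
  · have hslope := (hf.slope_le_leftDeriv_of_mem_interior hy hx hyx).trans
      (hf.leftDeriv_le_rightDeriv_of_mem_interior hx)
    rw [slope_def_field, div_le_iff₀ (sub_pos.2 hyx)] at hslope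
    linarith

/-- `(ηφ)^*`, with `φ` extended by `+∞` on the negative reals. -/
noncomputable def scaledConj (φ : ℝ → ℝ) (η t : ℝ) : EReal :=
  ⨆ s : {s : ℝ // 0 ≤ s}, ((t * s.1 - η * φ s.1 : ℝ) : EReal)

section scaledConj

variable {φ : ℝ → ℝ} {η t : ℝ}

theorem le_scaledConj {s : ℝ} (hs : 0 ≤ s) :
    ((t * s - η * φ s : ℝ) : EReal) ≤ scaledConj φ η t :=
  le_iSup (fun s : {s : ℝ // 0 ≤ s} => ((t * s.1 - η * φ s.1 : ℝ) : EReal)) ⟨s, hs⟩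

theorem coe_le_scaledConj (hφ1 : φ 1 = 0) : (t : EReal) ≤ scaledConj φ η t := by
  have h := le_scaledConj (φ := φ) (t := t) (η := η) zero_le_one
  rwa [mul_one, hφ1, mul_zero, sub_zero] at h

theorem scaledConj_ne_bot (hφ1 : φ 1 = 0) : scaledConj φ η t ≠ ⊥ :=
  ne_bot_of_le_ne_bot (EReal.coe_ne_bot t) (coe_le_scaledConj hφ1)

theorem monotone_scaledConj : Monotone (scaledConj φ η) := fun _ _ htt' =>
  iSup_mono fun s => EReal.coe_le_coe_iff.2 (by nlinarith [s.2])

theorem le_toReal_scaledConj {s : ℝ} (hs : 0 ≤ s) (hfin : scaledConj φ η t ≠ ⊤) :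
    t * s - η * φ s ≤ (scaledConj φ η t).toReal := by
  have h := EReal.toReal_le_toReal (le_scaledConj hs) (EReal.coe_ne_bot _) hfin
  rwa [EReal.toReal_coe] at h

theorem scaledConj_le_of_affine_le {k b : ℝ} (hφ : ∀ s, 0 ≤ s → k * s - b ≤ φ s)
    (hη : 0 ≤ η) (ht : t ≤ η * k) : scaledConj φ η t ≤ ((η * b : ℝ) : EReal) :=
  iSup_le fun s => EReal.coe_le_coe_iff.2 <| by
    nlinarith [s.2, mul_le_mul_of_nonneg_left (hφ s.1 s.2) hη, mul_le_mul_of_nonneg_right ht s.2]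

end scaledConj

/-- `μ + E_ν[(ηφ)^*(f - μ)]`. -/
noncomputable def regObjective {Z : Type*} [MeasurableSpace Z] (ν : Measure Z) (f : Z → ℝ)
    (φ : ℝ → ℝ) (η μ : ℝ) : EReal :=
  if (∀ᵐ z ∂ν, scaledConj φ η (f z - μ) ≠ ⊤) ∧
      Integrable (fun z => (scaledConj φ η (f z - μ)).toReal) ν
    then ((μ + ∫ z, (scaledConj φ η (f z - μ)).toReal ∂ν : ℝ) : EReal) else ⊤

section regObjective

variable {Z : Type*} [MeasurableSpace Z] {ν : Measure Z} [IsProbabilityMeasure ν] {f : Z → ℝ}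
  {φ : ℝ → ℝ} {η μ : ℝ}

theorem regObjective_le_of_affine_le {B k b : ℝ} (hf : Measurable f) (hB : ∀ z, B ≤ f z)
    (hφ1 : φ 1 = 0) (hφ : ∀ s, 0 ≤ s → k * s - b ≤ φ s) (hη : 0 ≤ η)
    (hμ : ∀ᵐ z ∂ν, f z - μ ≤ η * k) :
    regObjective ν f φ η μ ≤ ((μ + η * b : ℝ) : EReal) := by
  have hconj_le : ∀ᵐ z ∂ν, scaledConj φ η (f z - μ) ≤ ((η * b : ℝ) : EReal) :=
    hμ.mono fun z hz => scaledConj_le_of_affine_le hφ hη hz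
  have hfin : ∀ᵐ z ∂ν, scaledConj φ η (f z - μ) ≠ ⊤ :=
    hconj_le.mono fun z hz => ne_top_of_le_ne_top (EReal.coe_ne_top _) hz
  have hupper : ∀ᵐ z ∂ν, (scaledConj φ η (f z - μ)).toReal ≤ η * b :=
    hconj_le.mono fun z hz => by
      have h := EReal.toReal_le_toReal hz (scaledConj_ne_bot hφ1) (EReal.coe_ne_top _)
      rwa [EReal.toReal_coe] at h
  have hlower : ∀ᵐ z ∂ν, B - μ ≤ (scaledConj φ η (f z - μ)).toReal :=
    hfin.mono fun z hz => by
      have h := le_toReal_scaledConj zero_le_one hz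
      rw [hφ1] at h
      linarith [hB z]
  have hmeas : Measurable fun z => (scaledConj φ η (f z - μ)).toReal :=
    (monotone_scaledConj.measurable.comp (hf.sub_const μ)).ereal_toReal
  have hint : Integrable (fun z => (scaledConj φ η (f z - μ)).toReal) ν :=
    .of_bound hmeas.aestronglyMeasurable _
      ((hlower.and hupper).mono fun z hz => abs_le_max_abs_abs hz.1 hz.2)
  have hmean : ∫ z, (scaledConj φ η (f z - μ)).toReal ∂ν ≤ η * b := by
    simpa using integral_mono_ae hint (integrable_const (η * b)) hupper
  rw [regObjective, if_pos ⟨hfin, hint⟩, EReal.coe_le_coe_iff]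
  linarith

theorem le_regObjective_of_le_on {A : Set Z} {a : ℝ} (hf : Integrable f ν)
    (hA : MeasurableSet A) (hA0 : ν A ≠ 0) (ha : ∀ z ∈ A, a ≤ f z) (hη : 0 ≤ η) :
    ((a - η * max (φ (ν.real A)⁻¹) (φ 0) : ℝ) : EReal) ≤ regObjective ν f φ η μ := by
  rw [regObjective]
  split_ifs with h
  swap
  · exact le_top
  obtain ⟨hfin, hint⟩ := h
  set p := ν.real A with hp_def
  set c := max (φ p⁻¹) (φ 0)
  have hp : 0 < p := ENNReal.toReal_pos hA0 (measure_ne_top ν A)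
  set g : Z → ℝ := A.indicator fun _ => p⁻¹
  have hfμ : Integrable (fun z => f z - μ) ν := hf.sub (integrable_const μ)
  have hg_eq : (fun z => (f z - μ) * g z) = A.indicator fun z => (f z - μ) * p⁻¹ := by
    ext z
    exact (Set.indicator_mul_right A (fun z => f z - μ) fun _ => p⁻¹).symm
  have hintg : Integrable (fun z => (f z - μ) * g z) ν := by
    rw [hg_eq]
    exact (hfμ.mul_const _).indicator hA
  have hpoint :
      ∀ᵐ z ∂ν, (f z - μ) * g z - η * c ≤ (scaledConj φ η (f z - μ)).toReal :=
    hfin.mono fun z hz => by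
      have hg : 0 ≤ g z := Set.indicator_nonneg (fun _ _ => inv_nonneg.2 hp.le) z
      have hφg : φ (g z) ≤ c := by
        by_cases hzA : z ∈ A <;> simp [g, c, hzA]
      nlinarith [le_toReal_scaledConj hg hz, mul_le_mul_of_nonneg_left hφg hη]
  have hmean : a - μ ≤ ∫ z, (f z - μ) * g z ∂ν := by
    rw [hg_eq, integral_indicator hA]
    calc a - μ = ∫ _ in A, (a - μ) * p⁻¹ ∂ν := by
          rw [setIntegral_const, smul_eq_mul, ← hp_def]
          field_simp
      _ ≤ ∫ z in A, (f z - μ) * p⁻¹ ∂ν :=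
          setIntegral_mono_on (integrable_const _).integrableOn (hfμ.mul_const _).integrableOn hA
            fun z hz => mul_le_mul_of_nonneg_right (by linarith [ha z hz]) (inv_nonneg.2 hp.le)
  have hint_le := integral_mono_ae (f := fun z => (f z - μ) * g z - η * c)
    (hintg.sub (integrable_const _)) hint hpoint
  rw [integral_sub hintg (integrable_const _), integral_const, probReal_univ, one_smul] at hint_le
  rw [EReal.coe_le_coe_iff]
  linarith

end regObjective

theorem measure_lt_ne_zero_of_lt_essSup {Z : Type*} [MeasurableSpace Z] {ν : Measure Z}
    [NeZero ν] {f : Z → ℝ} {a : ℝ} (hf : IsBoundedUnder (· ≥ ·) (ae ν) f)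
    (ha : a < essSup f ν) : ν {z | a < f z} ≠ 0 := fun h0 =>
  (essSup_le_of_ae_le a (ae_iff.2 (by simpa only [not_le] using h0))
    hf.isCoboundedUnder_le).not_gt ha

theorem tendsto_nhdsGT_zero_of_le_of_forall_lt {V : ℝ → ℝ} {L : ℝ}
    (hle : ∀ η, 0 < η → V η ≤ L)
    (hge : ∀ a < L, ∃ c, ∀ η, 0 < η → a - η * c ≤ V η) :
    Tendsto V (nhdsWithin 0 (Set.Ioi 0)) (nhds L) := by
  have hpos : ∀ᶠ η in nhdsWithin (0 : ℝ) (Set.Ioi 0), 0 < η := self_mem_nhdsWithin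
  refine tendsto_order.2 ⟨fun a' ha' => ?_, fun a' ha' =>
    hpos.mono fun η hη => (hle η hη).trans_lt ha'⟩
  obtain ⟨a, ha'a, ha⟩ := exists_between ha'
  obtain ⟨c, hc⟩ := hge a ha
  have hlim : Tendsto (fun η => a - η * c) (nhds 0) (nhds (a - 0 * c)) :=
    tendsto_const_nhds.sub (tendsto_id.mul_const c)
  rw [zero_mul, sub_zero] at hlim
  filter_upwards [hpos, (hlim.mono_left nhdsWithin_le_nhds).eventually (lt_mem_nhds ha'a)]
    with η hη hlt
  exact hlt.trans_le (hc η hη)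

theorem stmt12_general {Z : Type*} [MeasurableSpace Z] (ν : Measure Z) [IsProbabilityMeasure ν]
    (f : Z → ℝ) (hf : Measurable f) (B : ℝ) (hfB : ∀ z, |f z| ≤ B)
    (φ : ℝ → ℝ) (hconv : ConvexOn ℝ (Set.Ici 0) φ)
    (hφ1 : φ 1 = 0)
    (conjE : ℝ → ℝ → EReal)
    (hconjE : ∀ η t : ℝ, conjE η t
      = ⨆ s : {s : ℝ // 0 ≤ s}, ((t * s.1 - η * φ s.1 : ℝ) : EReal))
    (Obj : ℝ → ℝ → EReal)
    (hObj : ∀ η μ : ℝ, Obj η μ =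
      if (∀ᵐ z ∂ν, conjE η (f z - μ) ≠ ⊤) ∧
          Integrable (fun z => (conjE η (f z - μ)).toReal) ν
        then ((μ + ∫ z, (conjE η (f z - μ)).toReal ∂ν : ℝ) : EReal) else ⊤)
    (V : ℝ → ℝ)
    (hV : ∀ η : ℝ, 0 < η → (V η : EReal) = ⨅ μ : ℝ, Obj η μ) :
    Tendsto V (nhdsWithin 0 (Set.Ioi 0)) (nhds (essSup f ν)) := by
  obtain rfl : conjE = scaledConj φ := funext fun η => funext (hconjE η)
  obtain rfl : Obj = regObjective ν f φ := funext fun η => funext (hObj η)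
  have hf_le : ∀ z, f z ≤ B := fun z => (abs_le.1 (hfB z)).2
  have hf_ge : ∀ z, -B ≤ f z := fun z => (abs_le.1 (hfB z)).1
  obtain ⟨k, hk⟩ := hconv.exists_affine_le_of_mem_interior (x := 1) (by simp)
  have hφk : ∀ s, 0 ≤ s → k * s - k ≤ φ s := fun s hs => by linarith [hk s hs]
  refine tendsto_nhdsGT_zero_of_le_of_forall_lt (fun η hη => ?_) fun a ha =>
    ⟨max (φ (ν.real {z | a < f z})⁻¹) (φ 0), fun η hη => ?_⟩
  · have hobj := regObjective_le_of_affine_le (μ := essSup f ν - η * k)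
      hf hf_ge hφ1 hφk hη.le
      ((ae_le_essSup (isBoundedUnder_of ⟨B, hf_le⟩)).mono fun z hz => by linarith)
    rw [sub_add_cancel] at hobj
    exact EReal.coe_le_coe_iff.1 ((hV η hη).trans_le ((iInf_le _ _).trans hobj))
  · refine EReal.coe_le_coe_iff.1 <| (hV η hη).symm ▸ le_iInf fun μ => ?_
    exact le_regObjective_of_le_on (.of_bound hf.aestronglyMeasurable B (ae_of_all _ hfB))
      (measurableSet_lt measurable_const hf)
      (measure_lt_ne_zero_of_lt_essSup (isBoundedUnder_of ⟨-B, hf_ge⟩) ha)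
      (fun _ hz => le_of_lt hz) hη.le

/-- consistency of the regularized value.  `φ` convex lsc, `φ(1)=0`, with
either `lim_{t→∞} φ(t)/t < ∞` or (`lim = ∞` and `dom φ = ℝ₊`, the latter automatic since `φ`
is real-valued on `[0,∞)` here).  `Obj η μ = μ + E_ν[(ηφ)^*(f − μ)]` as an extended real
(`+∞` unless the conjugate term is a.e. finite and integrable; the integrand is bounded
below so this is the extended integral).  If for each `η > 0` the infimum over `μ` is
attained at a finite `μ*_η` with finite value, then the optimal value `V η` converges to
`ess-sup_ν f` as `η → 0⁺`. -/
theorem stmt12 {Z : Type*} [MeasurableSpace Z] (ν : Measure Z) [IsProbabilityMeasure ν]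
    (f : Z → ℝ) (hf : Measurable f) (B : ℝ) (hfB : ∀ z, |f z| ≤ B)
    (φ : ℝ → ℝ) (hconv : ConvexOn ℝ (Set.Ici 0) φ)
    (hlsc : LowerSemicontinuousOn φ (Set.Ici 0)) (hφ1 : φ 1 = 0)
    (hgrowth : (∃ C : ℝ, Tendsto (fun t => φ t / t) atTop (nhds C)) ∨
      Tendsto (fun t => φ t / t) atTop atTop)
    (conjE : ℝ → ℝ → EReal)
    (hconjE : ∀ η t : ℝ, conjE η t
      = ⨆ s : {s : ℝ // 0 ≤ s}, ((t * s.1 - η * φ s.1 : ℝ) : EReal))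
    (Obj : ℝ → ℝ → EReal)
    (hObj : ∀ η μ : ℝ, Obj η μ =
      if (∀ᵐ z ∂ν, conjE η (f z - μ) ≠ ⊤) ∧
          Integrable (fun z => (conjE η (f z - μ)).toReal) ν
        then ((μ + ∫ z, (conjE η (f z - μ)).toReal ∂ν : ℝ) : EReal) else ⊤)
    (hattain : ∀ η : ℝ, 0 < η → ∃ μ : ℝ, Obj η μ ≠ ⊤ ∧ ∀ μ' : ℝ, Obj η μ ≤ Obj η μ')
    (V : ℝ → ℝ)
    (hV : ∀ η : ℝ, 0 < η → (V η : EReal) = ⨅ μ : ℝ, Obj η μ) :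
    Tendsto V (nhdsWithin 0 (Set.Ioi 0)) (nhds (essSup f ν)) :=
  stmt12_general ν f hf B hfB φ hconv hφ1 conjE hconjE Obj hObj V hV
end

section
/- Fix data points (x_i, y_i) for i=1,…,n, a probability measure β on a perturbation set, η > 0, and a strictly convex divergence φ. Define the operator T on bounded measurable functions g on the perturbation set by T(g) = inf_μ { μ + E_{b∼β}[(ηφ)^*(g(b) − μ)] }. Then T is 1-Lipschitz with respect to the sup-norm: |T(g) − T(h)| ≤ ‖g − h‖_∞ for all bounded measurable g, h. Consequently, if C is an (ε, ‖·‖_∞)-cover of the restricted function class G|_S, then {T∘c : c ∈ C} is an (ε, |·|)-cover of the adversarial class G_adv|_S, so N(G_adv|_S, ε, |·|) ≤ N(G|_S, ε, ‖·‖_∞). -/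
open MeasureTheory

/-- the OCE operator `T(g) = inf_μ { μ + E_β[(ηφ)^*(g(b) − μ)] }` (the
infimum taken over the `μ` for which the conjugate term is everywhere finite and
integrable, i.e. the effective domain of the extended objective) is 1-Lipschitz for the
sup-norm on bounded measurable functions; consequently, the image under `T` of any
`(ε, ‖·‖_∞)`-cover of a restricted function class `G|_S` is an `(ε, |·|)`-cover of the
adversarial class `G_adv|_S`, so `N(G_adv|_S, ε, |·|) ≤ N(G|_S, ε, ‖·‖_∞)`. -/
theorem stmt18 {Bsp : Type*} [MeasurableSpace Bsp] (β : Measure Bsp) [IsProbabilityMeasure β]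
    (η : ℝ) (hη : 0 < η)
    (φ : ℝ → ℝ) (hconv : StrictConvexOn ℝ (Set.Ici 0) φ)
    (hlsc : LowerSemicontinuousOn φ (Set.Ici 0)) (hφ1 : φ 1 = 0)
    (conjE : ℝ → EReal)
    (hconjE : ∀ t : ℝ, conjE t = ⨆ s : {s : ℝ // 0 ≤ s}, ((t * s.1 - η * φ s.1 : ℝ) : EReal))
    (T : (Bsp → ℝ) → ℝ)
    (hT : ∀ g : Bsp → ℝ, T g = sInf {v : ℝ | ∃ μ : ℝ,
        (∀ b, conjE (g b - μ) ≠ ⊤) ∧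
        Integrable (fun b => (conjE (g b - μ)).toReal) β ∧
        v = μ + ∫ b, (conjE (g b - μ)).toReal ∂β}) :
    (∀ g h : Bsp → ℝ, Measurable g → Measurable h →
      (∃ Bg, ∀ b, |g b| ≤ Bg) → (∃ Bh, ∀ b, |h b| ≤ Bh) →
      ∀ c : ℝ, (∀ b, |g b - h b| ≤ c) → |T g - T h| ≤ c) ∧
    (∀ {ι : Type} (n : ℕ) (G : ι → Fin n → Bsp → ℝ),
      (∀ θ i, Measurable (G θ i)) → (∀ θ i, ∃ Bg, ∀ b, |G θ i b| ≤ Bg) →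
      ∀ (Cset : Finset (Fin n → Bsp → ℝ)),
      (∀ c ∈ Cset, ∀ i, Measurable (c i)) →
      (∀ c ∈ Cset, ∀ i, ∃ Bc, ∀ b, |c i b| ≤ Bc) →
      ∀ ε : ℝ,
      (∀ θ, ∃ c ∈ Cset, ∀ i b, |G θ i b - c i b| ≤ ε) →
      ∀ θ, ∃ c ∈ Cset, ∀ i, |T (G θ i) - T (c i)| ≤ ε) := by
  -- the underlying space is nonempty
  haveI hBne : Nonempty Bsp := by
    by_contra hne
    rw [not_nonempty_iff] at hne
    have h1 : β Set.univ = 1 := measure_univ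
    rw [Set.univ_eq_empty_iff.mpr hne, measure_empty] at h1
    exact zero_ne_one h1
  -- basic facts about conjE
  have monoC : Monotone conjE := by
    intro t₁ t₂ hle
    rw [hconjE, hconjE]
    refine iSup_mono fun s => ?_
    have : t₁ * s.1 - η * φ s.1 ≤ t₂ * s.1 - η * φ s.1 := by
      nlinarith [s.2]
    exact_mod_cast this
  have lbC : ∀ t : ℝ, (t : EReal) ≤ conjE t := by
    intro t
    rw [hconjE]
    have := le_iSup (fun s : {s : ℝ // 0 ≤ s} => ((t * s.1 - η * φ s.1 : ℝ) : EReal))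
      ⟨1, zero_le_one⟩
    simpa [hφ1] using this
  have neBot : ∀ t : ℝ, conjE t ≠ ⊥ := fun t =>
    ((EReal.bot_lt_coe t).trans_le (lbC t)).ne'
  have measC : Measurable conjE := monoC.measurable
  -- the feasible-value set
  set S : (Bsp → ℝ) → Set ℝ := fun g => {v : ℝ | ∃ μ : ℝ,
      (∀ b, conjE (g b - μ) ≠ ⊤) ∧
      Integrable (fun b => (conjE (g b - μ)).toReal) β ∧
      v = μ + ∫ b, (conjE (g b - μ)).toReal ∂β} with hS
  -- bounded g is integrable
  have gInt : ∀ (g : Bsp → ℝ), Measurable g → (∃ Bg, ∀ b, |g b| ≤ Bg) → Integrable g β := by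
    rintro g hg ⟨Bg, hBg⟩
    refine Integrable.mono' (integrable_const Bg) hg.aestronglyMeasurable ?_
    filter_upwards with b using by simpa using hBg b
  -- lower bound on the toReal of conjE values
  have toReal_lb : ∀ t : ℝ, conjE t ≠ ⊤ → t ≤ (conjE t).toReal := by
    intro t ht
    have := EReal.toReal_le_toReal (lbC t) (EReal.coe_ne_bot t) ht
    simpa using this
  -- key construction: transferring feasible points
  have step : ∀ (g h : Bsp → ℝ), Measurable g → (∃ Bg, ∀ b, |g b| ≤ Bg) →
      ∀ c μ : ℝ, (∀ b, g b - h b ≤ c) →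
      (∀ b, conjE (h b - μ) ≠ ⊤) →
      Integrable (fun b => (conjE (h b - μ)).toReal) β →
      ((μ + c) + ∫ b, (conjE (g b - (μ + c))).toReal ∂β) ∈ S g ∧
      (μ + c) + ∫ b, (conjE (g b - (μ + c))).toReal ∂β
        ≤ (μ + ∫ b, (conjE (h b - μ)).toReal ∂β) + c := by
    rintro g h hg hgB c μ hc hTop hInt
    have hle : ∀ b, g b - (μ + c) ≤ h b - μ := fun b => by linarith [hc b]
    have hC : ∀ b, conjE (g b - (μ + c)) ≤ conjE (h b - μ) := fun b => monoC (hle b)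
    have hTop' : ∀ b, conjE (g b - (μ + c)) ≠ ⊤ := fun b =>
      ((hC b).trans_lt (lt_top_iff_ne_top.mpr (hTop b))).ne
    have hpt : ∀ b, (conjE (g b - (μ + c))).toReal ≤ (conjE (h b - μ)).toReal := fun b =>
      EReal.toReal_le_toReal (hC b) (neBot _) (hTop b)
    have hlb : ∀ b, g b - (μ + c) ≤ (conjE (g b - (μ + c))).toReal := fun b =>
      toReal_lb _ (hTop' b)
    have hmeas : Measurable fun b => (conjE (g b - (μ + c))).toReal :=
      (measC.comp (hg.sub measurable_const)).ereal_toReal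
    have hInt' : Integrable (fun b => (conjE (g b - (μ + c))).toReal) β := by
      refine Integrable.mono'
        (g := fun b => |(conjE (h b - μ)).toReal| + (|g b| + |μ + c|)) ?_
        hmeas.aestronglyMeasurable ?_
      · exact hInt.abs.add ((gInt g hg hgB).abs.add (integrable_const _))
      · filter_upwards with b
        have h1 := hpt b
        have h2 := hlb b
        have h3 := abs_nonneg ((conjE (h b - μ)).toReal)
        have h4 := le_abs_self ((conjE (h b - μ)).toReal)
        have h5 := le_abs_self (g b)
        have h6 := neg_abs_le (g b)
        have h7 := le_abs_self (μ + c)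
        have h8 := abs_nonneg (g b)
        have h9 := abs_nonneg (μ + c)
        rw [Real.norm_eq_abs, abs_le]
        constructor <;> linarith
    refine ⟨⟨μ + c, hTop', hInt', rfl⟩, ?_⟩
    have := integral_mono hInt' hInt hpt
    linarith
  -- the one-sided Lipschitz bound
  have keyle : ∀ g h : Bsp → ℝ, Measurable g → Measurable h →
      (∃ Bg, ∀ b, |g b| ≤ Bg) → (∃ Bh, ∀ b, |h b| ≤ Bh) →
      ∀ c : ℝ, 0 ≤ c → (∀ b, |g b - h b| ≤ c) → T g ≤ T h + c := by
    intro g h hg hh hgB hhB c hc0 hc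
    rw [hT g, hT h]
    rcases Set.eq_empty_or_nonempty (S h) with hemp | hne
    · have hemp' : S g = ∅ := by
        rw [Set.eq_empty_iff_forall_notMem]
        rintro v ⟨μ, hTop, hInt, _⟩
        have := (step h g hh hhB c μ (fun b => by
          have := hc b; rw [abs_sub_comm] at this; linarith [abs_le.mp this]) hTop hInt).1
        rw [Set.eq_empty_iff_forall_notMem] at hemp
        exact hemp _ this
      show sInf (S g) ≤ sInf (S h) + c
      rw [hemp, hemp', Real.sInf_empty]
      linarith
    · have hbdd : BddBelow (S g) := by
        refine ⟨∫ b, g b ∂β, ?_⟩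
        rintro v ⟨μ, hTop, hInt, rfl⟩
        have hlb : ∀ b, g b - μ ≤ (conjE (g b - μ)).toReal := fun b => toReal_lb _ (hTop b)
        have h1 : ∫ b, (g b - μ) ∂β ≤ ∫ b, (conjE (g b - μ)).toReal ∂β :=
          integral_mono ((gInt g hg hgB).sub (integrable_const μ)) hInt hlb
        have h2 : ∫ b, (g b - μ) ∂β = (∫ b, g b ∂β) - μ := by
          rw [integral_sub (gInt g hg hgB) (integrable_const μ)]
          simp
        rw [h2] at h1
        linarith
      show sInf (S g) ≤ sInf (S h) + c
      have : sInf (S g) - c ≤ sInf (S h) := by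
        refine le_csInf hne ?_
        rintro v ⟨μ, hTop, hInt, rfl⟩
        obtain ⟨hmem, hle⟩ := step g h hg hgB c μ
          (fun b => by linarith [abs_le.mp (hc b)]) hTop hInt
        have := csInf_le hbdd hmem
        linarith
      linarith
  constructor
  · intro g h hg hh hgB hhB c hc
    have hc0 : 0 ≤ c := by
      obtain ⟨b⟩ := hBne
      exact (abs_nonneg _).trans (hc b)
    have h1 := keyle g h hg hh hgB hhB c hc0 hc
    have h2 := keyle h g hh hg hhB hgB c hc0 (fun b => by rw [abs_sub_comm]; exact hc b)
    rw [abs_le]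
    constructor <;> linarith
  · intro ι n G hGmeas hGbdd Cset hCmeas hCbdd ε hcover θ
    obtain ⟨c, hcC, hcε⟩ := hcover θ
    refine ⟨c, hcC, fun i => ?_⟩
    exact (fun hgB hcB => by
      have h1 := keyle (G θ i) (c i) (hGmeas θ i) (hCmeas c hcC i) hgB hcB ε
      have h2 := keyle (c i) (G θ i) (hCmeas c hcC i) (hGmeas θ i) hcB hgB ε
      have hε0 : 0 ≤ ε := by
        obtain ⟨b⟩ := hBne
        exact (abs_nonneg _).trans (hcε i b)
      rw [abs_le]
      constructor
      · linarith [h2 hε0 (fun b => by rw [abs_sub_comm]; exact hcε i b)]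
      · linarith [h1 hε0 (hcε i)]) (hGbdd θ i) (hCbdd c hcC i)
end
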